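/- arXiv:2502.01792 — 5 statements merged into one kernel-verified Lean document; each statement's English description precedes it below -/
import Mathlib

section
/- Consider the system λ^{(u)} = σ(4(2λ^{(c)}−1)), λ^{(c)} = σ(3(2λ^{(u)}−1)) where σ(x) = 1/(1+exp(−x)). This system of two equations in (λ^{(u)}, λ^{(c)}) ∈ ℝ² has at least three distinct solutions. -/
noncomputable def sig (x : ℝ) : ℝ := 1 / (1 + Real.exp (-x))

lemma one_add_exp_pos (x : ℝ) : 0 < 1 + Real.exp x := by positivity

lemma sig_pos (x : ℝ) : 0 < sig x := by
  unfold sig; positivity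

lemma sig_lt_one (x : ℝ) : sig x < 1 := by
  unfold sig
  rw [div_lt_one (one_add_exp_pos _)]
  linarith [Real.exp_pos (-x)]

lemma sig_mono : Monotone sig := by
  intro a b hab
  unfold sig
  apply div_le_div_of_nonneg_left (by norm_num) (one_add_exp_pos _)
  have := Real.exp_le_exp.mpr (neg_le_neg hab)
  linarith

lemma sig_neg (x : ℝ) : sig (-x) = 1 - sig x := by
  unfold sig
  rw [neg_neg, Real.exp_neg]
  have h := Real.exp_pos x
  field_simp
  ring

lemma sig_cont : Continuous sig := by
  unfold sig
  exact continuous_const.div (by continuity) (fun x => (one_add_exp_pos (-x)).ne')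

lemma exp_ge (x : ℝ) : x + 1 ≤ Real.exp x := Real.add_one_le_exp x

lemma sig_neg_le {x c : ℝ} (hc : 0 < c) (h : x + 1 ≥ c) : sig (-x) ≤ 1 / (1 + c) := by
  unfold sig
  rw [neg_neg]
  have h1 : c ≤ Real.exp x := le_trans (by linarith) (exp_ge x)
  apply div_le_div_of_nonneg_left (by norm_num) (by linarith)
  linarith

lemma sigA : sig (-(3/5 : ℝ)) ≤ 5/13 := by
  have := sig_neg_le (x := (3/5:ℝ)) (c := 8/5) (by norm_num) (by norm_num)
  linarith [this]

lemma sigB : sig (-(12/13 : ℝ)) ≤ 13/38 := by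
  have := sig_neg_le (x := (12/13:ℝ)) (c := 25/13) (by norm_num) (by norm_num)
  linarith [this]

noncomputable def g (x : ℝ) : ℝ := sig (4 * (2 * sig (3 * (2 * x - 1)) - 1)) - x

lemma g_cont : Continuous g := by
  unfold g
  have h1 : Continuous fun x : ℝ => (3:ℝ) * (2 * x - 1) := by continuity
  have h2 : Continuous fun x : ℝ => 4 * (2 * sig (3 * (2 * x - 1)) - 1) :=
    continuous_const.mul (((continuous_const.mul (sig_cont.comp h1)).sub continuous_const))
  exact (sig_cont.comp h2).sub continuous_id

lemma sig_zero : sig 0 = 1/2 := by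
  unfold sig
  rw [neg_zero, Real.exp_zero]
  norm_num

lemma g_zero : 0 < g 0 := by
  unfold g
  have := sig_pos (4 * (2 * sig (3 * (2 * 0 - 1)) - 1))
  linarith

lemma g_one : g 1 < 0 := by
  unfold g
  have := sig_lt_one (4 * (2 * sig (3 * (2 * 1 - 1)) - 1))
  linarith

lemma g_lo : g (2/5) < 0 := by
  unfold g
  have e1 : (3 : ℝ) * (2 * (2/5) - 1) = -(3/5) := by norm_num
  rw [e1]
  have hA : sig (-(3/5 : ℝ)) ≤ 5/13 := sigA
  have h2 : 4 * (2 * sig (-(3/5 : ℝ)) - 1) ≤ -(12/13) := by linarith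
  have h3 := sig_mono h2
  have hB := sigB
  have := le_trans h3 hB
  linarith

lemma g_hi : 0 < g (3/5) := by
  unfold g
  have e1 : (3 : ℝ) * (2 * (3/5) - 1) = 3/5 := by norm_num
  rw [e1]
  have hA : (8:ℝ)/13 ≤ sig (3/5 : ℝ) := by
    have := sigA
    have h := sig_neg (3/5 : ℝ)
    linarith
  have h2 : (12:ℝ)/13 ≤ 4 * (2 * sig (3/5 : ℝ) - 1) := by linarith
  have h3 := sig_mono h2
  have hB : (25:ℝ)/38 ≤ sig (12/13 : ℝ) := by
    have := sigB
    have h := sig_neg (12/13 : ℝ)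
    linarith
  have := le_trans hB h3
  linarith

lemma sol_of_root {c : ℝ} (h : g c = 0) :
    c = 1 / (1 + Real.exp (-(4 * (2 * sig (3 * (2 * c - 1)) - 1)))) ∧
    sig (3 * (2 * c - 1)) = 1 / (1 + Real.exp (-(3 * (2 * c - 1)))) := by
  constructor
  · have h2 : sig (4 * (2 * sig (3 * (2 * c - 1)) - 1)) = c := by
      unfold g at h; linarith
    calc c = sig (4 * (2 * sig (3 * (2 * c - 1)) - 1)) := h2.symm
      _ = 1 / (1 + Real.exp (-(4 * (2 * sig (3 * (2 * c - 1)) - 1)))) := rfl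
  · rfl

/-- The system λu = σ(4(2λc−1)), λc = σ(3(2λu−1)) has at least three distinct solutions. -/
theorem stmt_1 :
    ∃ p q r : ℝ × ℝ, p ≠ q ∧ p ≠ r ∧ q ≠ r ∧
      (p.1 = 1 / (1 + Real.exp (-(4 * (2 * p.2 - 1)))) ∧
        p.2 = 1 / (1 + Real.exp (-(3 * (2 * p.1 - 1))))) ∧
      (q.1 = 1 / (1 + Real.exp (-(4 * (2 * q.2 - 1)))) ∧
        q.2 = 1 / (1 + Real.exp (-(3 * (2 * q.1 - 1))))) ∧
      (r.1 = 1 / (1 + Real.exp (-(4 * (2 * r.2 - 1)))) ∧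
        r.2 = 1 / (1 + Real.exp (-(3 * (2 * r.1 - 1))))) := by
  -- root in [0, 2/5] of -g : use intermediate_value via g decreasingly signed
  obtain ⟨a, ha, hga⟩ : ∃ c ∈ Set.Icc (0:ℝ) (2/5), g c = 0 := by
    have := intermediate_value_Icc' (by norm_num : (0:ℝ) ≤ 2/5) g_cont.continuousOn
    obtain ⟨c, hc, hgc⟩ := this ⟨le_of_lt g_lo, le_of_lt g_zero⟩
    exact ⟨c, hc, hgc⟩
  obtain ⟨b, hb, hgb⟩ : ∃ c ∈ Set.Icc (3/5:ℝ) 1, g c = 0 := by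
    have := intermediate_value_Icc' (by norm_num : (3/5:ℝ) ≤ 1) g_cont.continuousOn
    obtain ⟨c, hc, hgc⟩ := this ⟨le_of_lt g_one, le_of_lt g_hi⟩
    exact ⟨c, hc, hgc⟩
  have hmid : g (1/2) = 0 := by
    unfold g
    rw [show (3:ℝ) * (2 * (1/2) - 1) = 0 by norm_num, sig_zero,
        show (4:ℝ) * (2 * (1/2:ℝ) - 1) = 0 by norm_num, sig_zero]
    norm_num
  refine ⟨(a, sig (3 * (2 * a - 1))), ((1:ℝ)/2, sig (3 * (2 * (1/2:ℝ) - 1))),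
    (b, sig (3 * (2 * b - 1))), ?_, ?_, ?_, ?_, ?_, ?_⟩
  · intro h
    have : a = 1/2 := congrArg Prod.fst h
    have := ha.2; rw [‹a = 1/2›] at this; norm_num at this
  · intro h
    have h1 : a = b := congrArg Prod.fst h
    have := ha.2; have := hb.1; linarith [ha.2, hb.1, h1 ▸ ha.2]
  · intro h
    have h1 : (1:ℝ)/2 = b := congrArg Prod.fst h
    have := hb.1; linarith
  · exact sol_of_root hga
  · exact sol_of_root hmid
  · exact sol_of_root hgb
end

section
/- Let π_ε = (1−ε)π_0 + (ε/L)1_{L×K} for ε ∈ [0,1], with π_0 as the greedy 0-1 block policy with largest cluster size K_1. Then σ_min(I_K − c π_ε^T π_ε) ≥ 1 − c K_1 + c ε(2−ε)(K_1 − K/L), for any c > 0, where the bound is derived via Weyl's inequality from the decomposition I_K − c π_ε^T π_ε = I_K − c(1−ε)² π_0^T π_0 − (c ε(2−ε)/L) 1_{K×K}. -/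
/-!
Writing `P` for the assignment matrix and `J` for the all-ones matrices, `Pᵀ J = J` and
`Jᵀ J = L • J`, so `π_εᵀ π_ε = (1-ε)² PᵀP + (ε(2-ε)/L) J`. The quadratic form of `PᵀP` sums the
squared cluster sums of `x`, hence is at most `K₁ ‖x‖²` by Cauchy–Schwarz inside each cluster,
and that of `J` is `(∑ x)² ≤ K ‖x‖²`. So the quadratic form of `I - c π_εᵀ π_ε` is bounded below
by the claimed constant times `‖x‖²`, and testing it on an eigenvector bounds every eigenvalue.
-/

open Matrix Finset

namespace Matrix

variable {m n p R : Type*}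

def ones (m n R : Type*) [One R] : Matrix m n R := of fun _ _ => 1

def assignment [Zero R] [One R] [DecidableEq m] (r : n → m) : Matrix m n R :=
  of fun l k => if r k = l then 1 else 0

def maxFiberCard [Fintype m] [Fintype n] [DecidableEq m] (r : n → m) : ℕ :=
  univ.sup fun l => #{k | r k = l}

theorem transpose_ones [One R] : (ones m n R)ᵀ = ones n m R := rfl

section CommSemiring

variable [CommSemiring R]

theorem ones_mulVec [Fintype n] (x : n → R) : ones m n R *ᵥ x = fun _ => ∑ k, x k := by
  ext; simp [ones, mulVec, dotProduct]

theorem dotProduct_ones_mulVec [Fintype n] (x : n → R) :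
    x ⬝ᵥ (ones n n R *ᵥ x) = (∑ k, x k) ^ 2 := by
  simp [ones_mulVec, dotProduct, ← Finset.sum_mul, sq]

theorem dotProduct_transpose_mul_mulVec [Fintype m] [Fintype n] (A : Matrix m n R)
    (x : n → R) : x ⬝ᵥ ((Aᵀ * A) *ᵥ x) = (A *ᵥ x) ⬝ᵥ (A *ᵥ x) := by
  rw [← mulVec_mulVec, dotProduct_mulVec, vecMul_transpose]

theorem transpose_ones_mul_ones [Fintype m] :
    (ones m n R)ᵀ * ones m p R = (Fintype.card m : R) • ones n p R := by
  ext; simp [ones, mul_apply]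

variable [DecidableEq m] (r : n → m)

theorem assignment_mulVec [Fintype n] (x : n → R) :
    assignment r *ᵥ x = fun l => ∑ k with r k = l, x k := by
  ext l; simp [assignment, mulVec, dotProduct, Finset.sum_filter]

theorem transpose_assignment_mul_ones [Fintype m] :
    (assignment r : Matrix m n R)ᵀ * ones m p R = ones n p R := by
  ext; simp [assignment, ones, mul_apply]

end CommSemiring

theorem transpose_mul_self_smul_add_smul_ones [Fintype m] [Fintype n] [CommRing R]
    {P : Matrix m n R} (hP : Pᵀ * ones m n R = ones n n R) (a b : R) :
    (a • P + b • ones m n R)ᵀ * (a • P + b • ones m n R) =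
      a ^ 2 • (Pᵀ * P) + (2 * a * b + b ^ 2 * Fintype.card m) • ones n n R := by
  have hP' : (ones m n R)ᵀ * P = ones n n R := by
    rw [← transpose_transpose ((ones m n R)ᵀ * P), transpose_mul, transpose_transpose, hP,
      transpose_ones]
  simp only [transpose_add, transpose_smul, Matrix.add_mul, Matrix.mul_add, Matrix.smul_mul,
    Matrix.mul_smul, hP, hP', transpose_ones_mul_ones]
  module

section OrderedField

variable [Field R] [LinearOrder R] [IsStrictOrderedRing R]

theorem sum_sq_fiber_sum_le [Fintype m] [Fintype n] [DecidableEq m] (r : n → m) (x : n → R) :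
    ∑ l, (∑ k with r k = l, x k) ^ 2 ≤ maxFiberCard r * ∑ k, x k ^ 2 := by
  calc ∑ l, (∑ k with r k = l, x k) ^ 2
      ≤ ∑ l, (maxFiberCard r : R) * ∑ k with r k = l, x k ^ 2 := by
        gcongr with l
        refine (sq_sum_le_card_mul_sum_sq (s := {k | r k = l}) (f := x)).trans ?_
        gcongr
        exact_mod_cast Finset.le_sup (f := fun l => #{k | r k = l}) (Finset.mem_univ l)
    _ = maxFiberCard r * ∑ k, x k ^ 2 := by
        rw [← Finset.mul_sum, Finset.sum_fiberwise]

theorem dotProduct_ones_mulVec_le [Fintype n] (x : n → R) :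
    x ⬝ᵥ (ones n n R *ᵥ x) ≤ Fintype.card n * (x ⬝ᵥ x) := by
  rw [dotProduct_ones_mulVec]
  simpa [dotProduct, ← sq] using sq_sum_le_card_mul_sum_sq (s := univ) (f := x)

-- Both operands are ascribed: otherwise `CStarMatrix`'s default `HMul` instance is chosen.
theorem dotProduct_transpose_assignment_mul_mulVec_le [Fintype m] [Fintype n] [DecidableEq m]
    (r : n → m) (x : n → R) :
    x ⬝ᵥ (((assignment r : Matrix m n R)ᵀ * (assignment r : Matrix m n R)) *ᵥ x) ≤
      maxFiberCard r * (x ⬝ᵥ x) := by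
  rw [dotProduct_transpose_mul_mulVec, assignment_mulVec]
  simpa [dotProduct, ← sq] using sum_sq_fiber_sum_le r x

theorem le_of_mem_spectrum_of_le_dotProduct_mulVec [Fintype n] [DecidableEq n]
    {A : Matrix n n R} {b μ : R} (hA : ∀ x : n → R, b * (x ⬝ᵥ x) ≤ x ⬝ᵥ (A *ᵥ x))
    (hμ : μ ∈ spectrum R A) : b ≤ μ := by
  rw [← spectrum_toLin', ← Module.End.hasEigenvalue_iff_mem_spectrum] at hμ
  obtain ⟨v, hv⟩ := hμ.exists_hasEigenvector
  have hAv : A *ᵥ v = μ • v := by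
    simpa [Module.End.mem_eigenspace_iff] using hv.apply_eq_smul
  have hpos : 0 < v ⬝ᵥ v :=
    lt_of_le_of_ne (Finset.sum_nonneg fun i _ => mul_self_nonneg (v i))
      (Ne.symm (dotProduct_self_eq_zero.not.mpr hv.2))
  have hb := hA v
  rw [hAv, dotProduct_smul, smul_eq_mul] at hb
  exact le_of_mul_le_mul_right hb hpos

end OrderedField

end Matrix

def epsGreedy {m n R : Type*} [Fintype m] [DecidableEq m] [Field R] (r : n → m) (ε : R) :
    Matrix m n R :=
  (1 - ε) • assignment r + (ε / Fintype.card m) • ones m n R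

section EpsGreedy

variable {m n R : Type*} [Fintype m] [Fintype n] [DecidableEq m]

theorem transpose_epsGreedy_mul_self [Field R] (r : n → m) (ε : R) :
    (epsGreedy r ε)ᵀ * epsGreedy r ε =
      (1 - ε) ^ 2 • ((assignment r : Matrix m n R)ᵀ * (assignment r : Matrix m n R)) +
        (ε * (2 - ε) / Fintype.card m) • ones n n R := by
  rw [epsGreedy, transpose_mul_self_smul_add_smul_ones (transpose_assignment_mul_ones r)]
  congr 2
  rcases eq_or_ne (Fintype.card m : R) 0 with hm | hm
  · simp [hm]
  · field_simp
    ring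

theorem epsGreedy_fin {K L : ℕ} [Field R] (r : Fin K → Fin L) (ε : R) :
    epsGreedy r ε = (1 - ε) • assignment r + (ε / L) • ones (Fin L) (Fin K) R := by
  rw [epsGreedy, Fintype.card_fin]

theorem dotProduct_transpose_epsGreedy_mul_mulVec_le [Field R] [LinearOrder R]
    [IsStrictOrderedRing R] (r : n → m) {ε : R} (hε₀ : 0 ≤ ε) (hε₂ : ε ≤ 2) (x : n → R) :
    x ⬝ᵥ (((epsGreedy r ε)ᵀ * epsGreedy r ε) *ᵥ x) ≤
      ((1 - ε) ^ 2 * maxFiberCard r + ε * (2 - ε) / Fintype.card m * Fintype.card n) *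
        (x ⬝ᵥ x) := by
  have hcoef : 0 ≤ ε * (2 - ε) / Fintype.card m :=
    div_nonneg (mul_nonneg hε₀ (sub_nonneg.mpr hε₂)) (Nat.cast_nonneg _)
  rw [transpose_epsGreedy_mul_self, add_mulVec, smul_mulVec, smul_mulVec, dotProduct_add,
    dotProduct_smul, dotProduct_smul, smul_eq_mul, smul_eq_mul, add_mul, mul_assoc, mul_assoc]
  gcongr
  · exact dotProduct_transpose_assignment_mul_mulVec_le r x
  · exact dotProduct_ones_mulVec_le x

end EpsGreedy

theorem stmt_11_general (K L : ℕ) (r : Fin K → Fin L)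
    (c ε : ℝ) (hc : 0 < c) (hε : ε ∈ Set.Icc (0 : ℝ) 1) :
    ∀ μ : ℝ, μ ∈ spectrum ℝ
      ((1 : Matrix (Fin K) (Fin K) ℝ) -
        c • ((((1 - ε) • (Matrix.of fun (l : Fin L) (k : Fin K) =>
            if r k = l then (1 : ℝ) else 0) +
          (ε / L) • (Matrix.of fun (_ : Fin L) (_ : Fin K) => (1 : ℝ))))ᵀ *
          ((1 - ε) • (Matrix.of fun (l : Fin L) (k : Fin K) =>
            if r k = l then (1 : ℝ) else 0) +
          (ε / L) • (Matrix.of fun (_ : Fin L) (_ : Fin K) => (1 : ℝ))))) →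
      1 - c * ((Finset.univ.sup fun l : Fin L =>
          (Finset.univ.filter fun k : Fin K => r k = l).card : ℕ) : ℝ)
        + c * ε * (2 - ε) *
          (((Finset.univ.sup fun l : Fin L =>
            (Finset.univ.filter fun k : Fin K => r k = l).card : ℕ) : ℝ) -
            (K : ℝ) / (L : ℝ)) ≤ μ := by
  intro μ hμ
  change μ ∈ spectrum ℝ (1 - c • (((1 - ε) • assignment r + (ε / L) • ones _ _ ℝ)ᵀ *
    ((1 - ε) • assignment r + (ε / L) • ones _ _ ℝ))) at hμ
  rw [← epsGreedy_fin] at hμ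
  refine le_of_mem_spectrum_of_le_dotProduct_mulVec (fun x => ?_) hμ
  have hquad := dotProduct_transpose_epsGreedy_mul_mulVec_le r hε.1 (by linarith [hε.2]) x
  simp only [Fintype.card_fin] at hquad
  rw [sub_mulVec, one_mulVec, smul_mulVec, dotProduct_sub, dotProduct_smul, smul_eq_mul]
  calc _ = x ⬝ᵥ x - c * (((1 - ε) ^ 2 * maxFiberCard r + ε * (2 - ε) / L * K) * (x ⬝ᵥ x)) := by
        simp only [maxFiberCard]
        ring
    _ ≤ _ := by gcongr

/-- Weyl-type lower bound on the smallest eigenvalue of `I − c π_εᵀπ_ε` for the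
ε-greedy mixture `π_ε = (1−ε)π₀ + (ε/L)1_{L×K}`. -/
theorem stmt_11 (K L : ℕ) (hL : 0 < L) (r : Fin K → Fin L)
    (c ε : ℝ) (hc : 0 < c) (hε : ε ∈ Set.Icc (0 : ℝ) 1) :
    ∀ μ : ℝ, μ ∈ spectrum ℝ
      ((1 : Matrix (Fin K) (Fin K) ℝ) -
        c • ((((1 - ε) • (Matrix.of fun (l : Fin L) (k : Fin K) =>
            if r k = l then (1 : ℝ) else 0) +
          (ε / L) • (Matrix.of fun (_ : Fin L) (_ : Fin K) => (1 : ℝ))))ᵀ *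
          ((1 - ε) • (Matrix.of fun (l : Fin L) (k : Fin K) =>
            if r k = l then (1 : ℝ) else 0) +
          (ε / L) • (Matrix.of fun (_ : Fin L) (_ : Fin K) => (1 : ℝ))))) →
      1 - c * ((Finset.univ.sup fun l : Fin L =>
          (Finset.univ.filter fun k : Fin K => r k = l).card : ℕ) : ℝ)
        + c * ε * (2 - ε) *
          (((Finset.univ.sup fun l : Fin L =>
            (Finset.univ.filter fun k : Fin K => r k = l).card : ℕ) : ℝ) -
            (K : ℝ) / (L : ℝ)) ≤ μ :=
  stmt_11_general K L r c ε hc hε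
end

section
/- (Suboptimality of myopic-greedy under heterogeneous population effects) Consider K=1, L=2 with base utilities b_1 = 1, b_2 = 0.9, linear functions λ̄^u(x) = a_0 x, λ̄^c_1(x) = a_1 x, λ̄^c_2(x) = a_2 x, f_1(x) = b₁'x with b₁' = 0, f_2(x) = b₂'x with a_0 a_2 b₂' = 0.4. Writing p = π_{11} ∈ [0,1] for the probability on provider 1, the equilibrium welfare satisfies √(R(p)/a_0) = (0.9 + 0.1p)/(1 − 0.4(1−p)²) =: R̃(p). Then R̃(1) = 1 but there exists p' ∈ [0,1) with R̃(p') > 1; in particular R̃(p') > R̃(1) for every p' < 0.7, so the greedy policy p=1 is not optimal. -/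
/-- Suboptimality of myopic-greedy under heterogeneous population effects:
with `R̃(p) = (0.9+0.1p)/(1−0.4(1−p)²)` one has
`√(R(p)/a₀) = R̃(p)` on `[0,1]`, `R̃(1) = 1`, some `p' < 1` achieves `R̃(p') > 1`,
and indeed `R̃(p') > R̃(1)` for every `p' ∈ [0, 0.7)`. -/
theorem stmt_14 (a0 : ℝ) (ha0 : 0 < a0) :
    (∀ p ∈ Set.Icc (0 : ℝ) 1,
      Real.sqrt (a0 * (0.9 + 0.1 * p) ^ 2 / (1 - 0.4 * (1 - p) ^ 2) ^ 2 / a0)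
        = (0.9 + 0.1 * p) / (1 - 0.4 * (1 - p) ^ 2)) ∧
    (0.9 + 0.1 * (1 : ℝ)) / (1 - 0.4 * (1 - (1 : ℝ)) ^ 2) = 1 ∧
    (∃ p' : ℝ, 0 ≤ p' ∧ p' < 1 ∧
      (0.9 + 0.1 * p') / (1 - 0.4 * (1 - p') ^ 2) > 1) ∧
    (∀ p' : ℝ, 0 ≤ p' → p' < 0.7 →
      (0.9 + 0.1 * p') / (1 - 0.4 * (1 - p') ^ 2) >
        (0.9 + 0.1 * (1 : ℝ)) / (1 - 0.4 * (1 - (1 : ℝ)) ^ 2)) := by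
  have key : ∀ p' : ℝ, 0 ≤ p' → p' < 0.7 →
      (0.9 + 0.1 * p') / (1 - 0.4 * (1 - p') ^ 2) > 1 := by
    intro p hp hp1
    have hD : (0 : ℝ) < 1 - 0.4 * (1 - p) ^ 2 := by nlinarith
    rw [gt_iff_lt, lt_div_iff₀ hD]
    nlinarith
  refine ⟨?_, by norm_num, ⟨0, le_refl _, by norm_num, key 0 le_rfl (by norm_num)⟩, ?_⟩
  · intro p hp
    obtain ⟨hp0, hp1⟩ := hp
    have hN : (0 : ℝ) ≤ 0.9 + 0.1 * p := by nlinarith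
    have hD : (0 : ℝ) < 1 - 0.4 * (1 - p) ^ 2 := by nlinarith
    have heq : a0 * (0.9 + 0.1 * p) ^ 2 / (1 - 0.4 * (1 - p) ^ 2) ^ 2 / a0
        = ((0.9 + 0.1 * p) / (1 - 0.4 * (1 - p) ^ 2)) ^ 2 := by
      field_simp
    rw [heq, Real.sqrt_sq (by positivity)]
  · intro p hp hp7
    have := key p hp hp7
    norm_num at this ⊢
    linarith
end

section
/- In the linear homogeneous setting with K ≥ 1 and ε-greedy policies, define g(ε) = a_1‖(1−ε)b_0 + εb_1 + a_0b_2 1_K‖² and h(ε) = (1 − cK_1 + cε(2−ε)(K_1 − K/L))^{−2}, where c = a_0a_1a_2 > 0 and cK_1 < 1. Then the equilibrium welfare satisfies g(ε) ≤ R(π_ε; λ_∞^{(ε)}) ≤ g(ε)h(ε), where R(π; λ_∞) = a_1‖(I_K − cπ^Tπ)^{−1}(diag(π^TB) + a_0b_2 1_K)‖². -/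
open scoped BigOperators
open Matrix

lemma dot_self_nonneg {n : Type*} [Fintype n] (x : n → ℝ) : 0 ≤ x ⬝ᵥ x :=
  Finset.sum_nonneg fun i _ => mul_self_nonneg _

lemma dot_self_eq_sum_sq {n : Type*} [Fintype n] (x : n → ℝ) :
    x ⬝ᵥ x = ∑ i, x i ^ 2 := by simp [dotProduct, sq]

/-- Cauchy-Schwarz for dot products. -/
lemma dot_sq_le {n : Type*} [Fintype n] (x y : n → ℝ) :
    (x ⬝ᵥ y) ^ 2 ≤ (x ⬝ᵥ x) * (y ⬝ᵥ y) := by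
  have := Finset.sum_mul_sq_le_sq_mul_sq Finset.univ x y
  simpa [dotProduct, sq, mul_pow] using this

/-- Adjoint operator bound from the direct one. -/
lemma adj_bound {L K : Type*} [Fintype L] [Fintype K]
    (A : Matrix L K ℝ) (lam : ℝ) (hlam : 0 ≤ lam)
    (hA : ∀ x : K → ℝ, (A *ᵥ x) ⬝ᵥ (A *ᵥ x) ≤ lam * (x ⬝ᵥ x))
    (z : L → ℝ) : (Aᵀ *ᵥ z) ⬝ᵥ (Aᵀ *ᵥ z) ≤ lam * (z ⬝ᵥ z) := by
  set w : K → ℝ := Aᵀ *ᵥ z with hw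
  have key : w ⬝ᵥ w = z ⬝ᵥ (A *ᵥ w) := by
    rw [hw, mulVec_transpose, ← dotProduct_mulVec, ← mulVec_transpose]
  have h1 : (w ⬝ᵥ w) ^ 2 ≤ (z ⬝ᵥ z) * (lam * (w ⬝ᵥ w)) := by
    calc (w ⬝ᵥ w) ^ 2 = (z ⬝ᵥ (A *ᵥ w)) ^ 2 := by rw [key]
      _ ≤ (z ⬝ᵥ z) * ((A *ᵥ w) ⬝ᵥ (A *ᵥ w)) := dot_sq_le _ _
      _ ≤ (z ⬝ᵥ z) * (lam * (w ⬝ᵥ w)) :=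
          mul_le_mul_of_nonneg_left (hA w) (dot_self_nonneg z)
  rcases (dot_self_nonneg w).eq_or_lt with h0 | h0
  · rw [← h0]; exact mul_nonneg hlam (dot_self_nonneg z)
  · nlinarith [h1, h0]

lemma op_bound {K L : ℕ} (hL : 0 < L) (r : Fin K → Fin L) {ε : ℝ}
    (hε0 : 0 ≤ ε) (hε1 : ε ≤ 1) {K1 : ℕ}
    (hK1 : ∀ l : Fin L, ((Finset.univ.filter fun k : Fin K => r k = l)).card ≤ K1)
    (πe : Matrix (Fin L) (Fin K) ℝ)
    (hπe : πe = (1 - ε) • (Matrix.of fun (l : Fin L) (k : Fin K) =>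
        if r k = l then (1 : ℝ) else 0) +
      (ε / L) • (Matrix.of fun (_ : Fin L) (_ : Fin K) => (1 : ℝ)))
    (x : Fin K → ℝ) :
    (πe *ᵥ x) ⬝ᵥ (πe *ᵥ x) ≤
      ((1 - ε) ^ 2 * K1 + ε * (2 - ε) * ((K : ℝ) / (L : ℝ))) * (x ⬝ᵥ x) := by
  have hLr : (0 : ℝ) < (L : ℝ) := by exact_mod_cast hL
  set S : Fin L → ℝ := fun l => ∑ k, if r k = l then x k else 0 with hS
  set T : ℝ := ∑ k, x k with hT
  have hcol : ∀ l, (πe *ᵥ x) l = (1 - ε) * S l + ε / L * T := by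
    intro l
    rw [hS, hT]
    simp [hπe, mulVec, dotProduct, Matrix.add_apply, Matrix.smul_apply, smul_eq_mul,
      Matrix.of_apply, add_mul, ite_mul, Finset.sum_add_distrib, Finset.mul_sum,
      mul_ite, mul_zero, mul_one]
  have hsumS : ∑ l, S l = T := by
    rw [hS, hT, Finset.sum_comm]
    simp
  have hS2 : ∑ l, (S l) ^ 2 ≤ (K1 : ℝ) * ∑ k, x k ^ 2 := by
    have step : ∀ l : Fin L, (S l) ^ 2 ≤
        (K1 : ℝ) * ∑ k ∈ Finset.univ.filter (fun k : Fin K => r k = l), x k ^ 2 := by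
      intro l
      have hSl : S l = ∑ k ∈ Finset.univ.filter (fun k : Fin K => r k = l), x k := by
        rw [hS]; simp [Finset.sum_filter]
      have := sq_sum_le_card_mul_sum_sq
        (s := Finset.univ.filter (fun k : Fin K => r k = l)) (f := x)
      rw [hSl]
      refine this.trans ?_
      have hcard : (((Finset.univ.filter fun k : Fin K => r k = l)).card : ℝ) ≤ (K1 : ℝ) := by
        exact_mod_cast hK1 l
      have hnn : (0:ℝ) ≤ ∑ k ∈ Finset.univ.filter (fun k : Fin K => r k = l), x k ^ 2 :=
        Finset.sum_nonneg fun _ _ => sq_nonneg _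
      exact mul_le_mul_of_nonneg_right hcard hnn
    calc ∑ l, (S l) ^ 2
        ≤ ∑ l, (K1 : ℝ) * ∑ k ∈ Finset.univ.filter (fun k : Fin K => r k = l), x k ^ 2 :=
          Finset.sum_le_sum fun l _ => step l
      _ = (K1 : ℝ) * ∑ l, ∑ k ∈ Finset.univ.filter (fun k : Fin K => r k = l), x k ^ 2 := by
          rw [Finset.mul_sum]
      _ = (K1 : ℝ) * ∑ k, x k ^ 2 := by
          rw [Finset.sum_fiberwise Finset.univ r (fun k => x k ^ 2)]
  have hT2 : T ^ 2 ≤ (K : ℝ) * ∑ k, x k ^ 2 := by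
    have := sq_sum_le_card_mul_sum_sq (s := (Finset.univ : Finset (Fin K))) (f := x)
    simpa [hT] using this
  have hexp : (πe *ᵥ x) ⬝ᵥ (πe *ᵥ x) =
      (1 - ε) ^ 2 * (∑ l, (S l) ^ 2) + ε * (2 - ε) / L * T ^ 2 := by
    have : ∀ l, (πe *ᵥ x) l * (πe *ᵥ x) l =
        (1 - ε) ^ 2 * (S l) ^ 2 + (2 * (1 - ε) * (ε / L) * T) * S l + (ε / L) ^ 2 * T ^ 2 := by
      intro l; rw [hcol l]; ring
    rw [dotProduct]
    rw [Finset.sum_congr rfl fun l _ => this l]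
    rw [Finset.sum_add_distrib, Finset.sum_add_distrib, ← Finset.mul_sum, ← Finset.mul_sum,
      hsumS, Finset.sum_const, Finset.card_univ, Fintype.card_fin, nsmul_eq_mul]
    field_simp
    ring
  rw [hexp, dot_self_eq_sum_sq]
  have h1 : (1 - ε) ^ 2 * (∑ l, (S l) ^ 2) ≤ (1 - ε) ^ 2 * ((K1 : ℝ) * ∑ k, x k ^ 2) :=
    mul_le_mul_of_nonneg_left hS2 (sq_nonneg _)
  have h2 : ε * (2 - ε) / L * T ^ 2 ≤ ε * (2 - ε) / L * ((K : ℝ) * ∑ k, x k ^ 2) := by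
    apply mul_le_mul_of_nonneg_left hT2
    have : 0 ≤ ε * (2 - ε) := mul_nonneg hε0 (by linarith)
    positivity
  have heq : (1 - ε) ^ 2 * ((K1 : ℝ) * ∑ k, x k ^ 2) + ε * (2 - ε) / L * ((K : ℝ) * ∑ k, x k ^ 2)
      = ((1 - ε) ^ 2 * K1 + ε * (2 - ε) * ((K : ℝ) / (L : ℝ))) * ∑ k, x k ^ 2 := by
    field_simp
  linarith [h1, h2]
set_option maxHeartbeats 1000000 in
/-- Sandwich bound for the equilibrium welfare under the ε-greedy policy in the
linear homogeneous setting: `g(ε) ≤ R(π_ε; λ∞) ≤ g(ε)h(ε)`. -/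
theorem stmt_18 (K L : ℕ) (hL : 0 < L)
    (B : Fin L → Fin K → ℝ) (r : Fin K → Fin L)
    (hr : ∀ k l, B l k ≤ B (r k) k)
    (a0 a1 a2 b2 c ε : ℝ) (ha1 : 0 < a1) (hc0 : c = a0 * a1 * a2) (hc : 0 < c)
    (hε : ε ∈ Set.Icc (0 : ℝ) 1)
    (K1 : ℕ)
    (hK1 : K1 = Finset.univ.sup fun l : Fin L =>
      (Finset.univ.filter fun k : Fin K => r k = l).card)
    (hcK1 : c * (K1 : ℝ) < 1)
    (πe : Matrix (Fin L) (Fin K) ℝ)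
    (hπe : πe = (1 - ε) • (Matrix.of fun (l : Fin L) (k : Fin K) =>
        if r k = l then (1 : ℝ) else 0) +
      (ε / L) • (Matrix.of fun (_ : Fin L) (_ : Fin K) => (1 : ℝ)))
    (M : Matrix (Fin K) (Fin K) ℝ)
    (hM : M = (1 : Matrix (Fin K) (Fin K) ℝ) - c • (πeᵀ * πe))
    (v : Fin K → ℝ)
    (hv : v = fun k => (∑ l, πe l k * B l k) + a0 * b2)
    (g h : ℝ)
    (hg : g = a1 * ∑ k, ((1 - ε) * B (r k) k +
      ε * ((1 / L) * ∑ l, B l k) + a0 * b2) ^ 2)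
    (hh : h = ((1 - c * (K1 : ℝ) +
      c * ε * (2 - ε) * ((K1 : ℝ) - (K : ℝ) / (L : ℝ))) ^ 2)⁻¹) :
    g ≤ a1 * ∑ k, ((M⁻¹ *ᵥ v) k) ^ 2 ∧
    a1 * ∑ k, ((M⁻¹ *ᵥ v) k) ^ 2 ≤ g * h := by
  obtain ⟨hε0, hε1⟩ := hε
  have hLr : (0 : ℝ) < (L : ℝ) := by exact_mod_cast hL
  have hK1' : ∀ l : Fin L, ((Finset.univ.filter fun k : Fin K => r k = l)).card ≤ K1 :=
    fun l => hK1 ▸ Finset.le_sup (f := fun l : Fin L =>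
      (Finset.univ.filter fun k : Fin K => r k = l).card) (Finset.mem_univ l)
  set lam : ℝ := (1 - ε) ^ 2 * K1 + ε * (2 - ε) * ((K : ℝ) / (L : ℝ)) with hlamdef
  have op : ∀ x, (πe *ᵥ x) ⬝ᵥ (πe *ᵥ x) ≤ lam * (x ⬝ᵥ x) :=
    fun x => op_bound hL r hε0 hε1 hK1' πe hπe x
  have hKLcard : K ≤ L * K1 := by
    have hKsum : K = ∑ l : Fin L, ((Finset.univ.filter fun k : Fin K => r k = l)).card := by
      have := Finset.card_eq_sum_card_fiberwise
        (f := r) (s := (Finset.univ : Finset (Fin K))) (t := (Finset.univ : Finset (Fin L)))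
        fun k _ => Finset.mem_univ (r k)
      simpa [Finset.card_univ] using this
    calc K = ∑ l : Fin L, ((Finset.univ.filter fun k : Fin K => r k = l)).card := hKsum
      _ ≤ ∑ _l : Fin L, K1 := Finset.sum_le_sum fun l _ => hK1' l
      _ = L * K1 := by simp [Finset.sum_const, mul_comm]
  have hKL : (K : ℝ) / (L : ℝ) ≤ (K1 : ℝ) := by
    rw [div_le_iff₀ hLr]
    have : (K : ℝ) ≤ (L : ℝ) * (K1 : ℝ) := by exact_mod_cast hKLcard
    linarith
  have hε2 : 0 ≤ ε * (2 - ε) := mul_nonneg hε0 (by linarith)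
  have hlam0 : 0 ≤ lam := by
    have h1 : (0:ℝ) ≤ (1 - ε) ^ 2 * K1 := by positivity
    have h2 : (0:ℝ) ≤ ε * (2 - ε) * ((K : ℝ) / (L : ℝ)) := by
      apply mul_nonneg hε2; positivity
    rw [hlamdef]; linarith
  have hlamK1 : lam ≤ (K1 : ℝ) := by
    rw [hlamdef]
    nlinarith [mul_nonneg hε2 (sub_nonneg.mpr hKL)]
  set δ : ℝ := 1 - c * lam with hδdef
  have hδpos : 0 < δ := by
    have : c * lam ≤ c * K1 := mul_le_mul_of_nonneg_left hlamK1 hc.le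
    rw [hδdef]; linarith
  have hh' : h = (δ ^ 2)⁻¹ := by
    have he : 1 - c * (K1 : ℝ) + c * ε * (2 - ε) * ((K1 : ℝ) - (K : ℝ) / (L : ℝ)) = δ := by
      rw [hδdef, hlamdef]; ring
    rw [hh, he]
  have adj : ∀ z, (πeᵀ *ᵥ z) ⬝ᵥ (πeᵀ *ᵥ z) ≤ lam * (z ⬝ᵥ z) :=
    adj_bound πe lam hlam0 op
  have hMyeq : ∀ y : Fin K → ℝ, M *ᵥ y = y - c • (πeᵀ *ᵥ (πe *ᵥ y)) := by
    intro y
    rw [hM, Matrix.sub_mulVec, Matrix.one_mulVec, smul_mulVec, mulVec_mulVec]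
  have hyPy : ∀ y : Fin K → ℝ,
      y ⬝ᵥ (πeᵀ *ᵥ (πe *ᵥ y)) = (πe *ᵥ y) ⬝ᵥ (πe *ᵥ y) := by
    intro y
    rw [dotProduct_mulVec, vecMul_transpose]
  have hMq : ∀ y : Fin K → ℝ,
      y ⬝ᵥ (M *ᵥ y) = y ⬝ᵥ y - c * ((πe *ᵥ y) ⬝ᵥ (πe *ᵥ y)) := by
    intro y
    rw [hMyeq y, dotProduct_sub, dotProduct_smul, smul_eq_mul, hyPy y]
  have hMlow : ∀ y : Fin K → ℝ, δ * (y ⬝ᵥ y) ≤ y ⬝ᵥ (M *ᵥ y) := by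
    intro y
    rw [hMq y, hδdef]
    have h1 : c * ((πe *ᵥ y) ⬝ᵥ (πe *ᵥ y)) ≤ c * (lam * (y ⬝ᵥ y)) :=
      mul_le_mul_of_nonneg_left (op y) hc.le
    nlinarith [h1]
  have hMu : IsUnit M := by
    rw [← Matrix.mulVec_injective_iff_isUnit]
    intro y1 y2 hy
    have h0 : M *ᵥ (y1 - y2) = 0 := by rw [Matrix.mulVec_sub, hy, sub_self]
    have h1 : δ * ((y1 - y2) ⬝ᵥ (y1 - y2)) ≤ 0 := by
      have := hMlow (y1 - y2); rw [h0, dotProduct_zero] at this; exact this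
    have h2 : (y1 - y2) ⬝ᵥ (y1 - y2) = 0 := by
      have hle : (y1 - y2) ⬝ᵥ (y1 - y2) ≤ 0 := by nlinarith [hδpos]
      exact le_antisymm hle (dot_self_nonneg _)
    have h3 : y1 - y2 = 0 := by
      by_contra hne
      obtain ⟨i, hi⟩ := Function.ne_iff.mp hne
      have hpos : 0 < (y1 - y2) ⬝ᵥ (y1 - y2) := by
        rw [dot_self_eq_sum_sq]
        refine Finset.sum_pos' (fun j _ => sq_nonneg _) ⟨i, Finset.mem_univ i, ?_⟩
        have : (y1 - y2) i ≠ 0 := by simpa using hi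
        exact lt_of_le_of_ne (sq_nonneg _) (Ne.symm (pow_ne_zero 2 this))
      exact absurd h2 hpos.ne'
    exact sub_eq_zero.mp h3
  set y : Fin K → ℝ := M⁻¹ *ᵥ v with hy
  have hMyv : M *ᵥ y = v := by
    rw [hy, mulVec_mulVec, Matrix.mul_nonsing_inv _ ((Matrix.isUnit_iff_isUnit_det M).mp hMu),
      Matrix.one_mulVec]
  have hgv : g = a1 * (v ⬝ᵥ v) := by
    rw [hg, dot_self_eq_sum_sq]
    congr 1
    apply Finset.sum_congr rfl
    intro k _
    congr 1
    rw [hv]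
    simp only [hπe, Matrix.add_apply, Matrix.smul_apply, Matrix.of_apply, smul_eq_mul,
      add_mul, ite_mul, mul_ite, mul_zero, mul_one, one_mul, zero_mul,
      Finset.sum_add_distrib]
    rw [Finset.sum_ite_eq Finset.univ (r k) (fun l => (1 - ε) * B l k)]
    simp only [Finset.mem_univ, if_true, ← Finset.mul_sum]
    ring
  -- lower bound
  have hvv : v ⬝ᵥ v = y ⬝ᵥ y - 2 * c * ((πe *ᵥ y) ⬝ᵥ (πe *ᵥ y))
      + c ^ 2 * ((πeᵀ *ᵥ (πe *ᵥ y)) ⬝ᵥ (πeᵀ *ᵥ (πe *ᵥ y))) := by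
    rw [← hMyv, hMyeq y]
    set Py := πeᵀ *ᵥ (πe *ᵥ y) with hPy
    have expand : (y - c • Py) ⬝ᵥ (y - c • Py)
        = y ⬝ᵥ y - 2 * c * (y ⬝ᵥ Py) + c ^ 2 * (Py ⬝ᵥ Py) := by
      rw [sub_dotProduct, dotProduct_sub, dotProduct_sub, smul_dotProduct, dotProduct_smul,
        smul_dotProduct, dotProduct_smul, smul_eq_mul, smul_eq_mul, smul_eq_mul,
        dotProduct_comm Py y]
      simp only [smul_eq_mul]
      ring
    rw [expand, hyPy y]
  have hq0 : 0 ≤ (πe *ᵥ y) ⬝ᵥ (πe *ᵥ y) := dot_self_nonneg _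
  have lower : v ⬝ᵥ v ≤ y ⬝ᵥ y := by
    have hPb := adj (πe *ᵥ y)
    have hclam : c * lam < 1 := by rw [hδdef] at hδpos; linarith
    nlinarith [hvv, mul_le_mul_of_nonneg_left hPb (sq_nonneg c),
      mul_le_mul_of_nonneg_right hclam.le (mul_nonneg hc.le hq0)]
  constructor
  · rw [hgv, ← dot_self_eq_sum_sq]
    exact mul_le_mul_of_nonneg_left lower ha1.le
  · rw [hgv, hh', ← dot_self_eq_sum_sq]
    have hCS : (y ⬝ᵥ v) ^ 2 ≤ (y ⬝ᵥ y) * (v ⬝ᵥ v) := dot_sq_le y v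
    have hlowv : δ * (y ⬝ᵥ y) ≤ y ⬝ᵥ v := by have := hMlow y; rwa [hMyv] at this
    have hyy : y ⬝ᵥ y ≤ (v ⬝ᵥ v) * (δ ^ 2)⁻¹ := by
      rcases (dot_self_nonneg y).eq_or_lt with h0 | h0
      · rw [← h0]
        have := dot_self_nonneg v
        positivity
      · rw [← div_eq_mul_inv, le_div_iff₀ (by positivity)]
        have hsq : (δ * (y ⬝ᵥ y)) * (δ * (y ⬝ᵥ y)) ≤ (y ⬝ᵥ v) * (y ⬝ᵥ v) :=
          mul_self_le_mul_self (by positivity) hlowv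
        nlinarith [hsq, hCS, h0, hδpos]
    calc a1 * (y ⬝ᵥ y) ≤ a1 * ((v ⬝ᵥ v) * (δ ^ 2)⁻¹) :=
          mul_le_mul_of_nonneg_left hyy ha1.le
      _ = a1 * (v ⬝ᵥ v) * (δ ^ 2)⁻¹ := by ring
end

section
/- When K = 1, in the linear homogeneous setting the equilibrium welfare under the ε-greedy policy is R(ε) = a_1((1−ε)β_0 + εβ_1 + a_0b_2)²/(1 − c((1−ε)e_1 + ε/L·1)^T((1−ε)e_1 + ε/L·1))², where β_0 = max_l b_l, β_1 = (1/L)Σ_l b_l, and the denominator equals 1 − c((1−ε+ε/L)² + (L−1)(ε/L)²); R(ε) is strictly decreasing on [0,1] when β_0 > β_1, b_l ≥ 0, and 0 < c((1−ε+ε/L)² + (L−1)(ε/L)²) < 1 for all ε ∈ [0,1]. -/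
open scoped BigOperators

/-- K = 1 case: the equilibrium welfare
`R(ε) = a₁((1−ε)β₀ + εβ₁ + a₀b₂)² / (1 − c((1−ε+ε/L)² + (L−1)(ε/L)²))²`
under the ε-greedy policy is strictly decreasing on `[0,1]`. -/
theorem stmt_19 (L : ℕ) (hL : 1 < L)
    (b : Fin L → ℝ) (hb : ∀ l, 0 ≤ b l)
    (β0 β1 a0 a1 b2 c : ℝ)
    (hβ0 : β0 = ⨆ l, b l) (hβ1 : β1 = (1 / L) * ∑ l, b l)
    (hβ : β1 < β0)
    (ha1 : 0 < a1) (hc : 0 < c) (hw : 0 ≤ a0 * b2)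
    (hden : ∀ ε ∈ Set.Icc (0 : ℝ) 1,
      0 < c * ((1 - ε + ε / L) ^ 2 + ((L : ℝ) - 1) * (ε / L) ^ 2) ∧
      c * ((1 - ε + ε / L) ^ 2 + ((L : ℝ) - 1) * (ε / L) ^ 2) < 1) :
    StrictAntiOn (fun ε : ℝ =>
      a1 * ((1 - ε) * β0 + ε * β1 + a0 * b2) ^ 2 /
        (1 - c * ((1 - ε + ε / L) ^ 2 + ((L : ℝ) - 1) * (ε / L) ^ 2)) ^ 2)
      (Set.Icc 0 1) := by
  intro x hx y hy hxy
  obtain ⟨hx0, hx1⟩ := hx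
  obtain ⟨hy0, hy1⟩ := hy
  have hL2 : (2 : ℝ) ≤ (L : ℝ) := by exact_mod_cast hL
  have hL0 : (0 : ℝ) < (L : ℝ) := by linarith
  have hLne : (L : ℝ) ≠ 0 := ne_of_gt hL0
  -- β1 ≥ 0
  have hsum : 0 ≤ ∑ l, b l := Finset.sum_nonneg fun l _ => hb l
  have hβ1nn : 0 ≤ β1 := by
    rw [hβ1]; positivity
  -- numerator facts
  set Nx := (1 - x) * β0 + x * β1 + a0 * b2 with hNx
  set Ny := (1 - y) * β0 + y * β1 + a0 * b2 with hNy
  have hNynn : 0 ≤ Ny := by nlinarith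
  have hNlt : Ny < Nx := by nlinarith
  have hNsq : Ny ^ 2 < Nx ^ 2 := pow_lt_pow_left₀ hNlt hNynn two_ne_zero
  -- denominator facts
  set Sx := (1 - x + x / L) ^ 2 + ((L : ℝ) - 1) * (x / L) ^ 2 with hSx
  set Sy := (1 - y + y / L) ^ 2 + ((L : ℝ) - 1) * (y / L) ^ 2 with hSy
  have hSdiff : Sx - Sy = (1 - 1 / L) * (y - x) * (2 - x - y) := by
    rw [hSx, hSy]; field_simp; ring
  have hinv : 1 / (L : ℝ) < 1 := by
    rw [div_lt_one hL0]; linarith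
  have hSlt : Sy < Sx := by
    have hpos : 0 < (1 - 1 / L) * (y - x) * (2 - x - y) :=
      mul_pos (mul_pos (by linarith) (by linarith)) (by linarith)
    clear_value Sx Sy
    linarith [hSdiff, hpos]
  obtain ⟨hdx1, hdx2⟩ := hden x ⟨hx0, hx1⟩
  obtain ⟨hdy1, hdy2⟩ := hden y ⟨hy0, hy1⟩
  have hDx : 0 < 1 - c * Sx := by rw [hSx]; linarith
  have hDlt : 1 - c * Sx < 1 - c * Sy := by
    have := mul_lt_mul_of_pos_left hSlt hc
    linarith
  have hDsq : (1 - c * Sx) ^ 2 < (1 - c * Sy) ^ 2 :=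
    pow_lt_pow_left₀ hDlt hDx.le two_ne_zero
  have hDy : 0 < 1 - c * Sy := lt_trans hDx hDlt
  have hDxsq : 0 < (1 - c * Sx) ^ 2 := pow_pos hDx 2
  have hDysq : 0 < (1 - c * Sy) ^ 2 := pow_pos hDy 2
  show a1 * Ny ^ 2 / (1 - c * Sy) ^ 2 < a1 * Nx ^ 2 / (1 - c * Sx) ^ 2
  have h1 : a1 * Ny ^ 2 / (1 - c * Sy) ^ 2 ≤ a1 * Ny ^ 2 / (1 - c * Sx) ^ 2 := by
    apply div_le_div_of_nonneg_left (by positivity) hDxsq (le_of_lt hDsq)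
  have h2 : a1 * Ny ^ 2 / (1 - c * Sx) ^ 2 < a1 * Nx ^ 2 / (1 - c * Sx) ^ 2 := by
    apply div_lt_div_of_pos_right _ hDxsq
    exact mul_lt_mul_of_pos_left hNsq ha1
  linarith
end
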